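/- arXiv:1901.03606 — 2 statements merged into one kernel-verified Lean document; each statement's English description precedes it below -/
import Mathlib

section
/- In an exact category, admissible monomorphisms are closed under composition. -/
open CategoryTheory Limits

universe v u

/-- An exact structure (in the sense of Quillen/Keller) on an additive category: a class of
kernel-cokernel pairs ("exact sequences") closed under isomorphism, such that identities of
zero objects are admissible epimorphisms, admissible epimorphisms are closed under
composition, pullbacks of admissible epimorphisms along arbitrary morphisms exist and are
admissible epimorphisms, and pushouts of admissible monomorphisms along arbitrary morphisms
exist and are admissible monomorphisms. -/
structure ExactStructure (A : Type u) [Category.{v} A] [Preadditive A]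
    [HasZeroObject A] [HasBinaryBiproducts A] where
  /-- `IsExact i p` means that `(i, p)` is one of the distinguished exact sequences. -/
  IsExact : ∀ ⦃X Y Z : A⦄, (X ⟶ Y) → (Y ⟶ Z) → Prop
  comp_eq_zero : ∀ {X Y Z : A} {i : X ⟶ Y} {p : Y ⟶ Z}, IsExact i p → i ≫ p = 0
  is_kernel : ∀ {X Y Z : A} {i : X ⟶ Y} {p : Y ⟶ Z} (h : IsExact i p),
      Nonempty (IsLimit (KernelFork.ofι i (comp_eq_zero h)))
  is_cokernel : ∀ {X Y Z : A} {i : X ⟶ Y} {p : Y ⟶ Z} (h : IsExact i p),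
      Nonempty (IsColimit (CokernelCofork.ofπ p (comp_eq_zero h)))
  iso_closed : ∀ {X Y Z X' Y' Z' : A} {i : X ⟶ Y} {p : Y ⟶ Z}
      (eX : X ≅ X') (eY : Y ≅ Y') (eZ : Z ≅ Z') (i' : X' ⟶ Y') (p' : Y' ⟶ Z'),
      i ≫ eY.hom = eX.hom ≫ i' → p ≫ eZ.hom = eY.hom ≫ p' → IsExact i p → IsExact i' p'
  id_zero_epi : ∀ (Z : A), IsZero Z → ∃ (X : A) (i : X ⟶ Z), IsExact i (𝟙 Z)
  epi_comp : ∀ {X Y Z : A} (p : X ⟶ Y) (q : Y ⟶ Z),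
      (∃ (W : A) (i : W ⟶ X), IsExact i p) → (∃ (W : A) (i : W ⟶ Y), IsExact i q) →
      ∃ (W : A) (i : W ⟶ X), IsExact i (p ≫ q)
  pullback_epi : ∀ {B' C C' : A} (f : C ⟶ C') (p' : B' ⟶ C'),
      (∃ (W : A) (i : W ⟶ B'), IsExact i p') →
      ∃ (B : A) (g : B ⟶ B') (p : B ⟶ C),
        IsPullback g p p' f ∧ ∃ (W : A) (i : W ⟶ B), IsExact i p
  pushout_mono : ∀ {A₀ A' B : A} (g : A₀ ⟶ A') (i : A₀ ⟶ B),
      (∃ (Z : A) (p : B ⟶ Z), IsExact i p) →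
      ∃ (B' : A) (i' : A' ⟶ B') (h : B ⟶ B'),
        IsPushout g i i' h ∧ ∃ (Z : A) (p : B' ⟶ Z), IsExact i' p

variable {A : Type u} [Category.{v} A] [Preadditive A]
    [HasZeroObject A] [HasBinaryBiproducts A]

/-- A morphism is an admissible monomorphism if it appears as the first map of a
distinguished exact sequence. -/
def ExactStructure.AdmissibleMono (E : ExactStructure A) {X Y : A} (i : X ⟶ Y) : Prop :=
  ∃ (Z : A) (p : Y ⟶ Z), E.IsExact i p

/-- A morphism is an admissible epimorphism if it appears as the second map of a
distinguished exact sequence. -/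
def ExactStructure.AdmissibleEpi (E : ExactStructure A) {Y Z : A} (p : Y ⟶ Z) : Prop :=
  ∃ (X : A) (i : X ⟶ Y), E.IsExact i p

/-!
Keller's argument. Let `(i, p)` and `(j, q)` be exact pairs and push `j` out along `p`, giving
`i' : P ⟶ D` and `h : Z ⟶ D`. The pushout carries an exact pair `(i', f)` with `h ≫ f = q`, and
`i ≫ j` is a kernel of `h`. The map `biprod.snd ≫ h : Y ⊞ Z ⟶ D` is the composite of the shear
`(y, z) ↦ (p y, z - j y)`, a pullback of `p`, and `(a, z) ↦ i' a + h z`, a pullback of `q` along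
`f`; hence it is an admissible epimorphism. Its kernel `𝟙 ⊞ (i ≫ j)` is then an admissible
monomorphism, and pushing it out along `biprod.snd` yields `i ≫ j`.
-/

section Preadditive

variable {C : Type*} [Category C] [Preadditive C] [HasBinaryBiproducts C]

lemma IsPullback.biprod_fst_lift_sub {Y P Z : C} (p : Y ⟶ P) (j : Y ⟶ Z) :
    IsPullback biprod.fst (biprod.lift (biprod.fst ≫ p) (biprod.snd - biprod.fst ≫ j)) p
      (biprod.fst : P ⊞ Z ⟶ P) :=
  .of_isLimit' ⟨by simp⟩ <| PullbackCone.IsLimit.mk _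
    (fun s => biprod.lift s.fst (s.snd ≫ biprod.snd + s.fst ≫ j)) (fun s => by simp)
    (fun s => by ext <;> simp [s.condition]) (fun s m hfst hsnd => by
      ext
      · simpa using hfst
      · simp [← hsnd, ← hfst])

lemma IsPullback.biprod_snd_desc {P Z D Q : C} {i : P ⟶ D} {f : D ⟶ Q} {w : i ≫ f = 0}
    (hi : IsLimit (KernelFork.ofι i w)) (h : Z ⟶ D) :
    IsPullback biprod.snd (biprod.desc i h) (h ≫ f) f := by
  have : Mono i := Fork.IsLimit.mono hi
  have lift (s : PullbackCone (h ≫ f) f) : { l // l ≫ i = s.snd - s.fst ≫ h } :=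
    KernelFork.IsLimit.lift' hi _ (by simp [s.condition])
  refine .of_isLimit' ⟨by ext <;> simp [w]⟩ <| PullbackCone.IsLimit.mk _
    (fun s => biprod.lift (lift s).1 s.fst) (fun s => by simp)
    (fun s => by simp [(lift s).2]) (fun s m hfst hsnd => ?_)
  ext
  · rw [← cancel_mono i]
    simp [(lift s).2, ← hfst, ← hsnd, biprod.desc_eq]
  · simpa using hfst

lemma IsPushout.biprod_snd_map_id (Y : C) {X Z : C} (m : X ⟶ Z) :
    IsPushout (biprod.snd : Y ⊞ X ⟶ X) (biprod.map (𝟙 Y) m) m biprod.snd :=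
  .of_isColimit' ⟨by simp⟩ <| PushoutCocone.IsColimit.mk _ (fun s => biprod.inr ≫ s.inr)
    (fun s => by simpa using (biprod.inr ≫= s.condition).symm)
    (fun s => by
      have := biprod.inl ≫= s.condition
      ext <;> simp_all)
    (fun s n _ hn => by simp [← hn])

def isKernelCompOfCommSq {X Y Z P Q D : C} {i : X ⟶ Y} {p : Y ⟶ P} {j : Y ⟶ Z} {q : Z ⟶ Q}
    {wi : i ≫ p = 0} {wj : j ≫ q = 0} (hi : IsLimit (KernelFork.ofι i wi))
    (hj : IsLimit (KernelFork.ofι j wj)) {i' : P ⟶ D} [Mono i'] {h : Z ⟶ D}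
    (comm : p ≫ i' = j ≫ h) {f : D ⟶ Q} (hf : h ≫ f = q) :
    IsLimit (KernelFork.ofι (i ≫ j) (show (i ≫ j) ≫ h = 0 by
      rw [Category.assoc, ← comm, reassoc_of% wi, zero_comp])) :=
  have : Mono i := Fork.IsLimit.mono hi
  have : Mono j := Fork.IsLimit.mono hj
  KernelFork.IsLimit.ofι' _ _ fun k hk =>
    let l := KernelFork.IsLimit.lift' hj k (by rw [← hf, reassoc_of% hk, zero_comp])
    have hl : l.1 ≫ j = k := l.2
    let n := KernelFork.IsLimit.lift' hi l.1 (by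
      rw [← cancel_mono i', Category.assoc, comm, reassoc_of% hl, hk, zero_comp])
    have hn : n.1 ≫ i = l.1 := n.2
    ⟨n.1, by rw [reassoc_of% hn, hl]⟩

noncomputable def isKernelBiprodMapId {X Z D : C} {k : X ⟶ Z} {g : Z ⟶ D} {w : k ≫ g = 0}
    (hk : IsLimit (KernelFork.ofι k w)) (Y : C) :
    IsLimit (KernelFork.ofι (biprod.map (𝟙 Y) k) (show _ ≫ biprod.snd ≫ g = 0 by simp [w])) :=
  have : Mono k := Fork.IsLimit.mono hk
  KernelFork.IsLimit.ofι' _ _ fun t ht =>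
    let l := KernelFork.IsLimit.lift' hk (t ≫ biprod.snd) (by simpa using ht)
    have hl : l.1 ≫ k = t ≫ biprod.snd := l.2
    ⟨biprod.lift (t ≫ biprod.fst) l.1, by ext <;> simp [hl]⟩

def isCokernelOfIsPushout {Y Z P Q D : C} {p : Y ⟶ P} {j : Y ⟶ Z} {i : P ⟶ D} {h : Z ⟶ D}
    (sq : IsPushout p j i h) {q : Z ⟶ Q} {w : j ≫ q = 0} (hq : IsColimit (CokernelCofork.ofπ q w))
    {f : D ⟶ Q} (hif : i ≫ f = 0) (hf : h ≫ f = q) : IsColimit (CokernelCofork.ofπ f hif) :=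
  have : Epi q := Cofork.IsColimit.epi hq
  have : Epi f := epi_of_epi_fac hf
  CokernelCofork.IsColimit.ofπ' f hif fun k hk =>
    let l := CokernelCofork.IsColimit.desc' hq (h ≫ k) (by
      rw [← Category.assoc, ← sq.w, Category.assoc, hk, comp_zero])
    ⟨l.1, sq.hom_ext (by simp [reassoc_of% hif, hk]) (by rw [reassoc_of% hf]; exact l.2)⟩

end Preadditive

namespace ExactStructure

theorem isExact_of_isKernel (E : ExactStructure A) {K Y Z : A} {g : Y ⟶ Z}
    (hg : E.AdmissibleEpi g) {k : K ⟶ Y} {w : k ≫ g = 0} (hk : IsLimit (KernelFork.ofι k w)) :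
    E.IsExact k g := by
  obtain ⟨M, m, hmg⟩ := hg
  obtain ⟨hm⟩ := E.is_kernel hmg
  exact E.iso_closed (IsLimit.conePointUniqueUpToIso hm hk) (Iso.refl Y) (Iso.refl Z) k g
    (by simpa using (IsLimit.conePointUniqueUpToIso_hom_comp hm hk .zero).symm) (by simp) hmg

theorem isExact_of_isCokernel (E : ExactStructure A) {X Y Q : A} {k : X ⟶ Y}
    (hk : E.AdmissibleMono k) {g : Y ⟶ Q} {w : k ≫ g = 0}
    (hg : IsColimit (CokernelCofork.ofπ g w)) : E.IsExact k g := by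
  obtain ⟨M, m, hkm⟩ := hk
  obtain ⟨hm⟩ := E.is_cokernel hkm
  exact E.iso_closed (Iso.refl X) (Iso.refl Y) (IsColimit.coconePointUniqueUpToIso hm hg) k g
    (by simp) (by simpa using IsColimit.comp_coconePointUniqueUpToIso_hom hm hg .one) hkm

theorem AdmissibleEpi.comp {E : ExactStructure A} {X Y Z : A} {p : X ⟶ Y} {q : Y ⟶ Z}
    (hp : E.AdmissibleEpi p) (hq : E.AdmissibleEpi q) : E.AdmissibleEpi (p ≫ q) :=
  E.epi_comp p q hp hq

theorem AdmissibleEpi.of_isPullback {E : ExactStructure A} {W B' C C' : A} {g : W ⟶ B'}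
    {p : W ⟶ C} {p' : B' ⟶ C'} {f : C ⟶ C'} (sq : IsPullback g p p' f)
    (hp' : E.AdmissibleEpi p') : E.AdmissibleEpi p := by
  obtain ⟨B, g₀, p₀, sq₀, K, i, h⟩ := E.pullback_epi f p' hp'
  exact ⟨K, i ≫ (sq₀.isoIsPullback _ _ sq).hom,
    E.iso_closed (Iso.refl K) (sq₀.isoIsPullback _ _ sq) (Iso.refl C) _ p (by simp) (by simp) h⟩

theorem AdmissibleMono.of_isPushout {E : ExactStructure A} {A₀ A' B W : A} {g : A₀ ⟶ A'}
    {m : A₀ ⟶ B} {i : A' ⟶ W} {h : B ⟶ W} (sq : IsPushout g m i h) (hm : E.AdmissibleMono m) :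
    E.AdmissibleMono i := by
  obtain ⟨B', i₀, h₀, sq₀, Z, p, hp⟩ := E.pushout_mono g m hm
  exact ⟨Z, (sq₀.isoIsPushout _ _ sq).inv ≫ p,
    E.iso_closed (Iso.refl A') (sq₀.isoIsPushout _ _ sq) (Iso.refl Z) i _ (by simp) (by simp) hp⟩

theorem AdmissibleMono.of_isKernel_biprod_snd_comp {E : ExactStructure A} {X Y Z D : A}
    {k : X ⟶ Z} {g : Z ⟶ D} {w : k ≫ g = 0} (hk : IsLimit (KernelFork.ofι k w))
    (hg : E.AdmissibleEpi (biprod.snd ≫ g : Y ⊞ Z ⟶ D)) : E.AdmissibleMono k :=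
  .of_isPushout (IsPushout.biprod_snd_map_id Y k)
    ⟨D, _, E.isExact_of_isKernel hg (isKernelBiprodMapId hk Y)⟩

theorem exists_isPushout_isExact (E : ExactStructure A) {Y Z Q P : A} {j : Y ⟶ Z} {q : Z ⟶ Q}
    (hjq : E.IsExact j q) (p : Y ⟶ P) :
    ∃ (D : A) (i : P ⟶ D) (h : Z ⟶ D) (f : D ⟶ Q),
      IsPushout p j i h ∧ h ≫ f = q ∧ E.IsExact i f := by
  obtain ⟨D, i, h, sq, hi⟩ := E.pushout_mono p j ⟨Q, q, hjq⟩
  have hz : p ≫ 0 = j ≫ q := by rw [comp_zero, E.comp_eq_zero hjq]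
  obtain ⟨hq⟩ := E.is_cokernel hjq
  exact ⟨D, i, h, sq.desc 0 q hz, sq, sq.inr_desc _ _ hz, E.isExact_of_isCokernel hi
    (isCokernelOfIsPushout sq hq (sq.inl_desc _ _ hz) (sq.inr_desc _ _ hz))⟩

end ExactStructure

/-- In an exact category, admissible monomorphisms are closed under composition. -/
theorem ExactStructure.admissibleMono_comp (E : ExactStructure A)
    {X Y Z : A} (i : X ⟶ Y) (j : Y ⟶ Z)
    (hi : E.AdmissibleMono i) (hj : E.AdmissibleMono j) :
    E.AdmissibleMono (i ≫ j) := by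
  obtain ⟨P, p, hip⟩ := hi
  obtain ⟨Q, q, hjq⟩ := hj
  obtain ⟨D, i', h, f, sq, hf, hi'f⟩ := E.exists_isPushout_isExact hjq p
  obtain ⟨hi⟩ := E.is_kernel hip
  obtain ⟨hj⟩ := E.is_kernel hjq
  obtain ⟨hi'⟩ := E.is_kernel hi'f
  have : Mono i' := Fork.IsLimit.mono hi'
  have hsnd : E.AdmissibleEpi (biprod.snd ≫ h : Y ⊞ Z ⟶ D) := by
    have hα := AdmissibleEpi.of_isPullback (IsPullback.biprod_fst_lift_sub p j) ⟨X, i, hip⟩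
    have hγ := AdmissibleEpi.of_isPullback (IsPullback.biprod_snd_desc hi' h)
      (show E.AdmissibleEpi (h ≫ f) from hf ▸ ⟨Y, j, hjq⟩)
    convert hα.comp hγ using 1
    simp [sq.w]
  exact .of_isKernel_biprod_snd_comp (isKernelCompOfCommSq hi hj sq.w hf) hsnd
end

section
/- The fundamental category functor τ₁ (left adjoint to the nerve) takes inner anodyne maps of simplicial sets to isomorphisms of categories. -/
/-!
A morphism is invertible as soon as precomposition with it is bijective on maps into every
object. By the adjunction `τ₁ ⊣ N`, for `τ₁ f` this means that every map `X ⟶ N C` extends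
uniquely along `f`. Nerves are strict Segal, so inner horns have unique fillers in them:
both `N C ⟶ *` and the diagonal `N C ⟶ N C ⨯ N C` are inner fibrations, and lifting an
inner anodyne `f` against the first gives existence, against the second uniqueness.
-/

open CategoryTheory Limits Simplicial

/-- A map of simplicial sets is an inner fibration if it has the right lifting property
with respect to all inner horn inclusions. -/
def InnerFibration {X Y : SSet} (p : X ⟶ Y) : Prop :=
  ∀ (n : ℕ) (i : Fin (n + 3)), 0 < i.val → i.val < n + 2 →
    HasLiftingProperty (SSet.horn (n + 2) i).ι p

/-- A map of simplicial sets is inner anodyne if it has the left lifting property with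
respect to all inner fibrations. -/
def InnerAnodyne {A B : SSet} (j : A ⟶ B) : Prop :=
  ∀ ⦃X Y : SSet⦄ (p : X ⟶ Y), InnerFibration p → HasLiftingProperty j p

namespace CategoryTheory

variable {C : Type*} [Category C] {A B Z : C}

lemma comp_surjective_of_hasLiftingProperty_terminal_from [HasTerminal C] (i : A ⟶ B)
    [HasLiftingProperty i (terminal.from Z)] : Function.Surjective (fun g : B ⟶ Z ↦ i ≫ g) :=
  fun u ↦
    let sq : CommSq u i (terminal.from Z) (terminal.from B) := ⟨terminal.hom_ext _ _⟩
    ⟨sq.lift, sq.fac_left⟩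

lemma hasLiftingProperty_diag_iff [HasBinaryProduct Z Z] (i : A ⟶ B) :
    HasLiftingProperty i (diag Z) ↔ Function.Injective (fun g : B ⟶ Z ↦ i ≫ g) := by
  constructor
  · intro _ g₁ g₂ (h : i ≫ g₁ = i ≫ g₂)
    let sq : CommSq (i ≫ g₁) i (diag Z) (prod.lift g₁ g₂) :=
      ⟨by ext <;> simp [h]⟩
    have h₁ : sq.lift = g₁ := by simpa [prod.lift_fst] using sq.fac_right =≫ prod.fst
    have h₂ : sq.lift = g₂ := by simpa [prod.lift_snd] using sq.fac_right =≫ prod.snd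
    exact h₁.symm.trans h₂
  · refine fun hi ↦ ⟨fun {u b} sq ↦ ⟨⟨⟨b ≫ prod.fst, ?_, ?_⟩⟩⟩⟩
    · simpa [prod.lift_fst] using (sq.w =≫ prod.fst).symm
    · have h₁ := sq.w =≫ prod.fst
      have h₂ := sq.w =≫ prod.snd
      simp only [Category.assoc, prod.lift_fst, prod.lift_snd, Category.comp_id] at h₁ h₂
      have hb : b ≫ prod.fst = b ≫ prod.snd := hi (h₁.symm.trans h₂)
      ext <;> simp [prod.lift_fst, prod.lift_snd, hb]

end CategoryTheory

namespace SSet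

lemma spine_app {X Y : SSet} (σ : X ⟶ Y) (n : ℕ) (x : X _⦋n⦌) :
    Y.spine n (σ.app _ x) = (X.spine n x).map σ := by
  ext <;> exact (NatTrans.naturality_apply σ _ x).symm

lemma spine_yonedaEquiv {X : SSet} {n : ℕ} (u : Δ[n] ⟶ X) :
    X.spine n (yonedaEquiv u) = (stdSimplex.spineId n).map u :=
  spine_app u n _

lemma IsStrictSegal.horn_ι_comp_injective {X : SSet} [X.IsStrictSegal] {n : ℕ}
    {i : Fin (n + 3)} (h₀ : 0 < i) (hₙ : i < Fin.last (n + 2)) :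
    Function.Injective (fun u : Δ[n + 2] ⟶ X ↦ Λ[n + 2, i].ι ≫ u) := by
  intro u v (h : Λ[n + 2, i].ι ≫ u = Λ[n + 2, i].ι ≫ v)
  apply yonedaEquiv.injective
  apply (IsStrictSegal.segal _).injective
  rw [spine_yonedaEquiv, spine_yonedaEquiv, ← horn.spineId_map_hornInclusion i h₀ hₙ]
  exact congrArg (horn.spineId i h₀ hₙ).map h

lemma IsStrictSegal.diag_mem_innerFibrations (S : SSet) [S.IsStrictSegal] :
    innerFibrations (diag S) := fun _ _ _ ⟨_, h₀, hₙ⟩ ↦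
  (hasLiftingProperty_diag_iff _).2 (horn_ι_comp_injective h₀ hₙ)

end SSet

lemma innerFibration_of_mem_innerFibrations {X Y : SSet} {p : X ⟶ Y}
    (hp : SSet.innerFibrations p) : InnerFibration p :=
  fun _ i h₀ hₙ ↦ hp _ ⟨i, Fin.lt_def.2 h₀, Fin.lt_def.2 hₙ⟩

lemma InnerAnodyne.comp_bijective_of_isStrictSegal {X Y S : SSet.{0}} {f : X ⟶ Y}
    (hf : InnerAnodyne f) [S.IsStrictSegal] : Function.Bijective (fun g : Y ⟶ S ↦ f ≫ g) := by
  have hterminal : InnerFibration (terminal.from S) :=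
    innerFibration_of_mem_innerFibrations (SSet.mem_innerFibrations _)
  have hdiag : InnerFibration (diag S) :=
    innerFibration_of_mem_innerFibrations (SSet.IsStrictSegal.diag_mem_innerFibrations S)
  have := hf _ hterminal
  exact ⟨(hasLiftingProperty_diag_iff f).1 (hf _ hdiag),
    comp_surjective_of_hasLiftingProperty_terminal_from f⟩

/-- The fundamental category functor `τ₁` (any left adjoint to the nerve) takes inner
anodyne maps of simplicial sets to isomorphisms of categories. -/
theorem fundamental_category_functor_inner_anodyne_iso
    (τ : SSet.{0} ⥤ Cat.{0, 0}) (adj : τ ⊣ nerveFunctor)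
    {X Y : SSet} (f : X ⟶ Y) (hf : InnerAnodyne f) :
    IsIso (τ.map f) := by
  refine isIso_of_coyoneda_map_bijective _ fun C ↦ ?_
  rw [adj.map_comp_bijective_iff]
  exact hf.comp_bijective_of_isStrictSegal (S := nerve C)
end
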